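/- arXiv:2509.13817 — 4 statements merged into one kernel-verified Lean document; each statement's English description precedes it below -/
import Mathlib

section
/- For every κ > 0 there exists m > 0 such that (1/(4κ)) · L^{−d} Σ_{k∈Λ} cos(2π k̃_1 / L) / (m − λ_k^L) = m/(2d) + 1 − 1/(8κd), where k̃_1 ∈ {0,…,L−1} is the representative of the first coordinate of k. -/
noncomputable section

open Finset Real

/-- The Fourier eigenvalue `λ_k^L = 2 Σ_j (cos(2π k̃_j / L) − 1)` of the discrete Laplacian
on the torus `(ℤ/Lℤ)^d`. -/
def lamEig (d L : ℕ) (k : Fin d → ZMod L) : ℝ :=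
  2 * ∑ j : Fin d, (Real.cos (2 * Real.pi * ((k j).val : ℝ) / (L : ℝ)) - 1)

set_option maxHeartbeats 1000000 in
/-- For every `κ > 0` there exists `m > 0` solving the finite-volume edge self-consistency
equation
`(1/(4κ)) L^{-d} Σ_k cos(2π k̃_1/L)/(m − λ_k^L) = m/(2d) + 1 − 1/(8κd)`. -/
theorem stmt4 (d L : ℕ) (hd : 1 ≤ d) (hL : 3 ≤ L) [NeZero L] (κ : ℝ) (hκ : 0 < κ) :
    ∃ m : ℝ, 0 < m ∧
      (1 / (4 * κ)) * (((L : ℝ) ^ d)⁻¹ * ∑ k : Fin d → ZMod L,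
          Real.cos (2 * Real.pi * ((k ⟨0, hd⟩).val : ℝ) / (L : ℝ)) / (m - lamEig d L k))
        = m / (2 * d) + 1 - 1 / (8 * κ * d) := by
  have hd0 : (0:ℝ) < d := by exact_mod_cast hd
  have hL0 : (0:ℝ) < L := by positivity
  set N : ℝ := (L : ℝ) ^ d with hNdef
  have hN : 0 < N := by positivity
  -- eigenvalues are ≤ 2(cos θ_j − 1) for any j, hence ≤ 0
  have hlamle : ∀ (k : Fin d → ZMod L) (j : Fin d),
      lamEig d L k ≤ 2 * (Real.cos (2 * Real.pi * ((k j).val : ℝ) / (L : ℝ)) - 1) := by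
    intro k j
    have h : ∀ i ∈ Finset.univ, (0:ℝ) ≤ -(Real.cos (2 * Real.pi * ((k i).val : ℝ) / (L : ℝ)) - 1) := by
      intro i _
      have := Real.cos_le_one (2 * Real.pi * ((k i).val : ℝ) / (L : ℝ))
      linarith
    have := Finset.single_le_sum h (Finset.mem_univ j)
    simp only [Finset.sum_neg_distrib] at this
    unfold lamEig
    nlinarith [this]
  have hlam : ∀ k : Fin d → ZMod L, lamEig d L k ≤ 0 := by
    intro k
    have h := hlamle k ⟨0, hd⟩
    have := Real.cos_le_one (2 * Real.pi * ((k ⟨0, hd⟩).val : ℝ) / (L : ℝ))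
    linarith
  set F : ℝ → ℝ := fun m => (1 / (4 * κ)) * (N⁻¹ * ∑ k : Fin d → ZMod L,
      Real.cos (2 * Real.pi * ((k ⟨0, hd⟩).val : ℝ) / (L : ℝ)) / (m - lamEig d L k))
      - (m / (2 * d) + 1 - 1 / (8 * κ * d)) with hF
  set C : ℝ := 1 / (8 * κ) + 3 / 2 with hC
  have hCpos : 0 < C := by positivity
  set a : ℝ := min 1 (1 / (4 * κ * N * C)) with ha
  set b : ℝ := max 1 (2 * d * (1 / (4 * κ) + 1 / (8 * κ * d))) with hb
  have ha0 : 0 < a := lt_min one_pos (by positivity)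
  have ha1 : a ≤ 1 := min_le_left _ _
  have hb1 : (1:ℝ) ≤ b := le_max_left _ _
  have hab : a ≤ b := ha1.trans hb1
  -- denominators positive on [a,b]
  have hden : ∀ m ∈ Set.Icc a b, ∀ k : Fin d → ZMod L, 0 < m - lamEig d L k := by
    intro m hm k
    have := hlam k
    have : a ≤ m := hm.1
    linarith [hlam k, hm.1, ha0]
  -- continuity
  have hcont : ContinuousOn F (Set.Icc a b) := by
    apply ContinuousOn.sub
    · apply ContinuousOn.mul continuousOn_const
      apply ContinuousOn.mul continuousOn_const
      apply continuousOn_finset_sum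
      intro k _
      apply ContinuousOn.div continuousOn_const
      · exact (continuousOn_id.sub continuousOn_const)
      · intro m hm
        exact ne_of_gt (hden m hm k)
    · fun_prop
  -- cardinality
  have hcard : (Finset.univ : Finset (Fin d → ZMod L)).card = L ^ d := by
    simp [Fintype.card_fun, ZMod.card]
  -- upper bound at b : each term ≤ 1/b
  have hFb : F b ≤ 0 := by
    have hbmem : b ∈ Set.Icc a b := ⟨hab, le_refl b⟩
    have hterm : ∀ k : Fin d → ZMod L,
        Real.cos (2 * Real.pi * ((k ⟨0, hd⟩).val : ℝ) / (L : ℝ)) / (b - lamEig d L k) ≤ 1 / b := by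
      intro k
      have hD := hden b hbmem k
      have hb0 : (0:ℝ) < b := lt_of_lt_of_le one_pos hb1
      rw [div_le_div_iff₀ hD hb0]
      have hc := Real.cos_le_one (2 * Real.pi * ((k ⟨0, hd⟩).val : ℝ) / (L : ℝ))
      nlinarith [hlam k]
    have hsum : (∑ k : Fin d → ZMod L,
        Real.cos (2 * Real.pi * ((k ⟨0, hd⟩).val : ℝ) / (L : ℝ)) / (b - lamEig d L k)) ≤ N / b := by
      calc _ ≤ ∑ _k : Fin d → ZMod L, 1 / b := Finset.sum_le_sum (fun k _ => hterm k)
        _ = N / b := by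
            rw [Finset.sum_const, hcard, nsmul_eq_mul, hNdef]
            push_cast
            ring
    have hb0 : (0:ℝ) < b := lt_of_lt_of_le one_pos hb1
    have h1 : (1 / (4 * κ)) * (N⁻¹ * ∑ k : Fin d → ZMod L,
        Real.cos (2 * Real.pi * ((k ⟨0, hd⟩).val : ℝ) / (L : ℝ)) / (b - lamEig d L k))
        ≤ 1 / (4 * κ * b) := by
      have : (1 / (4 * κ)) * (N⁻¹ * (N / b)) = 1 / (4 * κ * b) := by
        field_simp
      calc (1 / (4 * κ)) * (N⁻¹ * ∑ k : Fin d → ZMod L,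
            Real.cos (2 * Real.pi * ((k ⟨0, hd⟩).val : ℝ) / (L : ℝ)) / (b - lamEig d L k))
          ≤ (1 / (4 * κ)) * (N⁻¹ * (N / b)) := by
            apply mul_le_mul_of_nonneg_left _ (by positivity)
            exact mul_le_mul_of_nonneg_left hsum (by positivity)
        _ = 1 / (4 * κ * b) := this
    have h2 : 1 / (4 * κ * b) ≤ 1 / (4 * κ) := by
      apply div_le_div_of_nonneg_left one_pos.le (by positivity)
      nlinarith
    have h3 : 1 / (4 * κ) + 1 / (8 * κ * d) ≤ b / (2 * d) := by
      have hble : 2 * d * (1 / (4 * κ) + 1 / (8 * κ * d)) ≤ b := le_max_right _ _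
      have h2d : (0:ℝ) < 2 * d := by positivity
      rw [le_div_iff₀ h2d]
      nlinarith
    simp only [hF]
    linarith
  -- lower bound at a
  have hFa : 0 ≤ F a := by
    have hamem : a ∈ Set.Icc a b := ⟨le_refl a, hab⟩
    -- each term ≥ -1/2
    have hterm : ∀ k : Fin d → ZMod L,
        (-(1:ℝ)/2) ≤ Real.cos (2 * Real.pi * ((k ⟨0, hd⟩).val : ℝ) / (L : ℝ)) / (a - lamEig d L k) := by
      intro k
      have hD := hden a hamem k
      rw [le_div_iff₀ hD]
      have hle := hlamle k ⟨0, hd⟩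
      set c := Real.cos (2 * Real.pi * ((k ⟨0, hd⟩).val : ℝ) / (L : ℝ))
      nlinarith
    -- the zero mode term is 1/a
    set k0 : Fin d → ZMod L := fun _ => 0 with hk0
    have hcos0 : Real.cos (2 * Real.pi * ((k0 ⟨0, hd⟩).val : ℝ) / (L : ℝ)) = 1 := by
      simp [hk0, ZMod.val_zero]
    have hlam0 : lamEig d L k0 = 0 := by
      unfold lamEig
      simp [hk0, ZMod.val_zero]
    have hsum : (1 : ℝ) / a - N / 2 ≤ ∑ k : Fin d → ZMod L,
        Real.cos (2 * Real.pi * ((k ⟨0, hd⟩).val : ℝ) / (L : ℝ)) / (a - lamEig d L k) := by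
      rw [← Finset.add_sum_erase _ _ (Finset.mem_univ k0)]
      have h1 : Real.cos (2 * Real.pi * ((k0 ⟨0, hd⟩).val : ℝ) / (L : ℝ)) / (a - lamEig d L k0)
          = 1 / a := by rw [hcos0, hlam0, sub_zero]
      have h2 : -(N / 2) ≤ ∑ k ∈ Finset.univ.erase k0,
          Real.cos (2 * Real.pi * ((k ⟨0, hd⟩).val : ℝ) / (L : ℝ)) / (a - lamEig d L k) := by
        have hcard2 : ((Finset.univ.erase k0).card : ℝ) ≤ N := by
          have : (Finset.univ.erase k0).card ≤ (Finset.univ : Finset (Fin d → ZMod L)).card :=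
            Finset.card_le_card (Finset.erase_subset _ _)
          rw [hcard] at this
          rw [hNdef]
          exact_mod_cast this
        calc -(N/2) ≤ ((Finset.univ.erase k0).card : ℝ) * (-(1:ℝ)/2) := by nlinarith
          _ ≤ _ := by
              have := Finset.card_nsmul_le_sum (Finset.univ.erase k0)
                (fun k => Real.cos (2 * Real.pi * ((k ⟨0, hd⟩).val : ℝ) / (L : ℝ)) / (a - lamEig d L k))
                (-(1:ℝ)/2) (fun k _ => hterm k)
              rwa [nsmul_eq_mul] at this
      linarith
    -- a ≤ 1/(4κNC) gives 1/a ≥ 4κNC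
    have hainv : 4 * κ * N * C ≤ 1 / a := by
      have h := min_le_right (1:ℝ) (1 / (4 * κ * N * C))
      rw [← ha] at h
      rw [le_div_iff₀ ha0]
      calc 4 * κ * N * C * a ≤ 4 * κ * N * C * (1 / (4 * κ * N * C)) := by
            apply mul_le_mul_of_nonneg_left h (by positivity)
        _ = 1 := by field_simp
    have h1 : C - 1 / (8 * κ) ≤ (1 / (4 * κ)) * (N⁻¹ * ∑ k : Fin d → ZMod L,
        Real.cos (2 * Real.pi * ((k ⟨0, hd⟩).val : ℝ) / (L : ℝ)) / (a - lamEig d L k)) := by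
      have step1 : (1 / (4 * κ)) * (N⁻¹ * (1 / a - N / 2)) ≤ (1 / (4 * κ)) * (N⁻¹ * ∑ k : Fin d → ZMod L,
          Real.cos (2 * Real.pi * ((k ⟨0, hd⟩).val : ℝ) / (L : ℝ)) / (a - lamEig d L k)) := by
        apply mul_le_mul_of_nonneg_left _ (by positivity)
        exact mul_le_mul_of_nonneg_left hsum (by positivity)
      have step2 : C - 1 / (8 * κ) ≤ (1 / (4 * κ)) * (N⁻¹ * (1 / a - N / 2)) := by
        have heq : (1 / (4 * κ)) * (N⁻¹ * (4 * κ * N * C - N / 2)) = C - 1 / (8 * κ) := by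
          field_simp
          ring
        rw [← heq]
        apply mul_le_mul_of_nonneg_left _ (by positivity)
        apply mul_le_mul_of_nonneg_left _ (by positivity)
        linarith
      linarith
    have hd1 : (1:ℝ) ≤ d := by exact_mod_cast hd
    have h2 : a / (2 * d) ≤ 1 / 2 := by
      rw [div_le_iff₀ (by positivity)]
      linarith
    have h3 : 0 < 1 / (8 * κ * d) := by positivity
    simp only [hF]
    linarith
  -- IVT
  have hmem : (0:ℝ) ∈ Set.Icc (F b) (F a) := ⟨hFb, hFa⟩
  obtain ⟨m, hmIcc, hFm⟩ := intermediate_value_Icc' hab hcont hmem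
  refine ⟨m, lt_of_lt_of_le ha0 hmIcc.1, ?_⟩
  have : F m = 0 := hFm
  simp only [hF] at this
  linarith
end
end

section
/- Let κ > 0 and m > 0. If (1/(4κ)) · L^{−d} Σ_{k∈Λ} cos(2π k̃_1 / L) / (m − λ_k^L) = m/(2d) + 1 − 1/(8κd), where k̃_1 ∈ {0,…,L−1} is the representative of the first coordinate of k, then L^{−d} Σ_{k∈Λ} 1/(m − λ_k^L) = 4κ. (In other words, any positive solution of the edge self-consistency equation automatically makes the diagonal of the scaled Green function equal to 4κ, i.e. gives a field with unit variance at every site.) -/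
noncomputable section

lemma lamEig_nonpos (d L : ℕ) (k : Fin d → ZMod L) : lamEig d L k ≤ 0 := by
  unfold lamEig
  have h : ∑ j : Fin d, (Real.cos (2 * Real.pi * ((k j).val : ℝ) / (L : ℝ)) - 1) ≤ 0 :=
    Finset.sum_nonpos fun j _ => sub_nonpos.mpr (Real.cos_le_one _)
  linarith

lemma lamEig_comp (d L : ℕ) (σ : Equiv.Perm (Fin d)) (k : Fin d → ZMod L) :
    lamEig d L (k ∘ σ) = lamEig d L k := by
  unfold lamEig
  congr 1
  exact Equiv.sum_comp σ fun j => Real.cos (2 * Real.pi * ((k j).val : ℝ) / (L : ℝ)) - 1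

/-- Any positive solution `m` of the finite-volume edge self-consistency equation
automatically makes the diagonal of the scaled Green function equal to `4κ`:
if `(1/(4κ)) L^{-d} Σ_k cos(2π k̃_1/L)/(m − λ_k^L) = m/(2d) + 1 − 1/(8κd)`, then
`L^{-d} Σ_k 1/(m − λ_k^L) = 4κ`. -/
theorem stmt5 (d L : ℕ) (hd : 1 ≤ d) (hL : 3 ≤ L) [NeZero L] (κ m : ℝ)
    (hκ : 0 < κ) (hm : 0 < m)
    (h : (1 / (4 * κ)) * (((L : ℝ) ^ d)⁻¹ * ∑ k : Fin d → ZMod L,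
          Real.cos (2 * Real.pi * ((k ⟨0, hd⟩).val : ℝ) / (L : ℝ)) / (m - lamEig d L k))
        = m / (2 * d) + 1 - 1 / (8 * κ * d)) :
    ((L : ℝ) ^ d)⁻¹ * ∑ k : Fin d → ZMod L, (m - lamEig d L k)⁻¹ = 4 * κ := by
  have hLpos : (0:ℝ) < L := by positivity
  have hN : (0:ℝ) < (L:ℝ)^d := by positivity
  set i0 : Fin d := ⟨0, hd⟩
  set S : ℝ := ∑ k : Fin d → ZMod L,
      Real.cos (2 * Real.pi * ((k i0).val : ℝ) / (L : ℝ)) / (m - lamEig d L k) with hSdef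
  set G : ℝ := ∑ k : Fin d → ZMod L, (m - lamEig d L k)⁻¹ with hGdef
  have hdenom : ∀ k : Fin d → ZMod L, (0:ℝ) < m - lamEig d L k := fun k => by
    have := lamEig_nonpos d L k; linarith
  -- symmetry: each coordinate contributes the same
  have hsym : ∀ j : Fin d,
      (∑ k : Fin d → ZMod L,
        Real.cos (2 * Real.pi * ((k j).val : ℝ) / (L : ℝ)) / (m - lamEig d L k)) = S := by
    intro j
    rw [hSdef]
    refine Fintype.sum_bijective (fun k => k ∘ (Equiv.swap j i0))
      ((Equiv.swap j i0).arrowCongr (Equiv.refl (ZMod L))).symm.bijective _ _ ?_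
    intro k
    rw [lamEig_comp]
    simp [Equiv.swap_apply_left]
  -- summing over coordinates
  have hkey : (d : ℝ) * S = -((L:ℝ)^d) / 2 + (m / 2 + d) * G := by
    have h1 : ∑ j : Fin d, (∑ k : Fin d → ZMod L,
        Real.cos (2 * Real.pi * ((k j).val : ℝ) / (L : ℝ)) / (m - lamEig d L k))
        = (d : ℝ) * S := by
      rw [Finset.sum_congr rfl fun j _ => hsym j]
      simp [mul_comm]
    rw [← h1, Finset.sum_comm]
    have h2 : ∀ k : Fin d → ZMod L,
        (∑ j : Fin d, Real.cos (2 * Real.pi * ((k j).val : ℝ) / (L : ℝ)) / (m - lamEig d L k))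
        = -(1:ℝ)/2 + (m / 2 + d) * (m - lamEig d L k)⁻¹ := by
      intro k
      rw [← Finset.sum_div]
      have hc : ∑ j : Fin d, Real.cos (2 * Real.pi * ((k j).val : ℝ) / (L : ℝ))
          = lamEig d L k / 2 + d := by
        unfold lamEig
        rw [Finset.sum_sub_distrib]
        simp
      rw [hc]
      have hk := hdenom k
      field_simp
      ring
    rw [Finset.sum_congr rfl fun k _ => h2 k, Finset.sum_add_distrib]
    have hcard : (Finset.univ : Finset (Fin d → ZMod L)).card = L ^ d := by
      simp [Finset.card_univ]
    rw [← Finset.mul_sum]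
    simp [hcard, hGdef]
    ring
  -- now finish by algebra
  have hNinv : ((L:ℝ)^d)⁻¹ * ((L:ℝ)^d) = 1 := inv_mul_cancel₀ (ne_of_gt hN)
  have hdr : (1:ℝ) ≤ (d:ℝ) := by exact_mod_cast hd
  have hmd : (0:ℝ) < m / 2 + d := by linarith
  have hh : (d : ℝ) * (((L:ℝ)^d)⁻¹ * S) = -1/2 + (m/2 + d) * (((L:ℝ)^d)⁻¹ * G) := by
    have := congrArg (fun x => ((L:ℝ)^d)⁻¹ * x) hkey
    calc (d : ℝ) * (((L:ℝ)^d)⁻¹ * S) = ((L:ℝ)^d)⁻¹ * ((d:ℝ) * S) := by ring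
      _ = ((L:ℝ)^d)⁻¹ * (-((L:ℝ)^d) / 2 + (m / 2 + d) * G) := by rw [hkey]
      _ = -(((L:ℝ)^d)⁻¹ * ((L:ℝ)^d)) / 2 + (m/2 + d) * (((L:ℝ)^d)⁻¹ * G) := by ring
      _ = -1/2 + (m/2 + d) * (((L:ℝ)^d)⁻¹ * G) := by rw [hNinv]
  -- from h : (1/(4κ)) * (N⁻¹ S) = m/(2d) + 1 − 1/(8κd)
  have hκ' : (4*κ) ≠ 0 := by positivity
  have hd0 : (d:ℝ) ≠ 0 := by linarith
  have hNS : ((L:ℝ)^d)⁻¹ * S = 4*κ*(m/(2*d) + 1 - 1/(8*κ*d)) := by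
    field_simp at h ⊢
    linarith [h]
  rw [hNS] at hh
  have hexp : (d:ℝ) * (4*κ*(m/(2*d) + 1 - 1/(8*κ*d))) = 2*κ*m + 4*κ*(d:ℝ) - 1/2 := by
    field_simp
    ring
  rw [hexp] at hh
  have : (m/2 + (d:ℝ)) * (((L:ℝ)^d)⁻¹ * G) = (m/2 + (d:ℝ)) * (4*κ) := by
    linarith [hh]
  exact mul_left_cancel₀ (ne_of_gt hmd) this
end
end

section
/- If d ≥ 3, then the function k ↦ 1 / ( 2 Σ_{j=1}^d (1 − cos(2π k_j)) ) is Lebesgue-integrable on the open cube (0,1)^d (where the denominator is strictly positive); in particular the constant κ_c := (1/4) ∫_{(0,1)^d} dk / ( 2 Σ_{j=1}^d (1 − cos(2π k_j)) ) is finite. -/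
noncomputable section
open MeasureTheory

/-- `min x (1-x)` to the power `-2/3`. -/
def phi (x : ℝ) : ℝ := (min x (1 - x)) ^ (-(2/3) : ℝ)

lemma sin_lb {x : ℝ} (hx : x ∈ Set.Icc (0:ℝ) 1) :
    2 * min x (1 - x) ≤ Real.sin (Real.pi * x) := by
  obtain ⟨h0, h1⟩ := hx
  rcases le_total x (1/2) with h | h
  · rw [min_eq_left (by linarith)]
    have := Real.mul_le_sin (x := Real.pi * x) (by positivity)
      (by nlinarith [Real.pi_pos])
    calc 2 * x = 2 / Real.pi * (Real.pi * x) := by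
          field_simp
      _ ≤ Real.sin (Real.pi * x) := this
  · rw [min_eq_right (by linarith)]
    have heq : Real.sin (Real.pi * x) = Real.sin (Real.pi * (1 - x)) := by
      rw [show Real.pi * (1 - x) = Real.pi - Real.pi * x by ring, Real.sin_pi_sub]
    rw [heq]
    have := Real.mul_le_sin (x := Real.pi * (1 - x)) (by nlinarith [Real.pi_pos])
      (by nlinarith [Real.pi_pos])
    calc 2 * (1 - x) = 2 / Real.pi * (Real.pi * (1 - x)) := by
          field_simp
      _ ≤ _ := this

lemma cos_lb {x : ℝ} (hx : x ∈ Set.Icc (0:ℝ) 1) :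
    8 * (min x (1 - x)) ^ 2 ≤ 1 - Real.cos (2 * Real.pi * x) := by
  have h1 : Real.cos (2 * Real.pi * x) = 1 - 2 * Real.sin (Real.pi * x) ^ 2 := by
    rw [show 2 * Real.pi * x = 2 * (Real.pi * x) by ring, Real.cos_two_mul,
      Real.cos_sq']
    ring
  have h2 := sin_lb hx
  have hm : 0 ≤ min x (1 - x) := le_min hx.1 (by linarith [hx.2])
  nlinarith [h2, hm]


lemma phi_integrable : IntegrableOn phi (Set.Ioo (0:ℝ) 1) := by
  have h1 : IntegrableOn (fun x : ℝ => x ^ (-(2/3) : ℝ)) (Set.Ioo (0:ℝ) 1) := by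
    have := intervalIntegral.intervalIntegrable_rpow' (a := 0) (b := 1)
      (r := (-(2/3) : ℝ)) (by norm_num)
    exact ((intervalIntegrable_iff_integrableOn_Ioc_of_le zero_le_one).mp this).mono_set
      Set.Ioo_subset_Ioc_self
  have h2 : IntegrableOn (fun x : ℝ => (1 - x) ^ (-(2/3) : ℝ)) (Set.Ioo (0:ℝ) 1) := by
    have := intervalIntegral.intervalIntegrable_rpow' (a := 0) (b := 1)
      (r := (-(2/3) : ℝ)) (by norm_num)
    have h3 := (this.comp_sub_left 1).symm
    simp only [sub_zero, sub_self] at h3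
    exact ((intervalIntegrable_iff_integrableOn_Ioc_of_le zero_le_one).mp h3).mono_set
      Set.Ioo_subset_Ioc_self
  have hmeas : AEStronglyMeasurable phi (volume.restrict (Set.Ioo (0:ℝ) 1)) := by
    apply Measurable.aestronglyMeasurable
    unfold phi; fun_prop
  refine (h1.add h2).mono' hmeas ?_
  filter_upwards [ae_restrict_mem measurableSet_Ioo] with x hx
  obtain ⟨hx0, hx1⟩ := hx
  have hb : 0 ≤ (1 - x) ^ (-(2/3) : ℝ) := Real.rpow_nonneg (by linarith) _
  have ha : 0 ≤ x ^ (-(2/3) : ℝ) := Real.rpow_nonneg (by linarith) _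
  have hphi : 0 ≤ phi x := Real.rpow_nonneg (le_min hx0.le (by linarith)) _
  rw [Real.norm_of_nonneg hphi]
  simp only [Pi.add_apply]
  rcases le_total x (1 - x) with h | h
  · rw [phi, min_eq_left h]; linarith
  · rw [phi, min_eq_right h]; linarith

/-- For `d ≥ 3`, the function `k ↦ 1/(2 Σ_j (1 − cos(2π k_j)))` is Lebesgue-integrable on the
open cube `(0,1)^d`; in particular the critical constant
`κ_c = (1/4) ∫_{(0,1)^d} dk / (2 Σ_j (1 − cos(2π k_j)))` is finite. -/
theorem stmt8 (d : ℕ) (hd : 3 ≤ d) :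
    IntegrableOn
      (fun k : Fin d → ℝ => (2 * ∑ j : Fin d, (1 - Real.cos (2 * Real.pi * k j)))⁻¹)
      (Set.univ.pi fun _ : Fin d => Set.Ioo (0 : ℝ) 1) := by
  have h0d : 0 < d := by omega
  have h1d : 1 < d := by omega
  have h2d : 2 < d := by omega
  set j0 : Fin d := ⟨0, h0d⟩
  set j1 : Fin d := ⟨1, h1d⟩
  set j2 : Fin d := ⟨2, h2d⟩
  set s : Finset (Fin d) := {j0, j1, j2} with hs
  have hne01 : j0 ≠ j1 := by simp [j0, j1, Fin.ext_iff]
  have hne02 : j0 ≠ j2 := by simp [j0, j2, Fin.ext_iff]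
  have hne12 : j1 ≠ j2 := by simp [j1, j2, Fin.ext_iff]
  -- the dominating product function
  set h : Fin d → ℝ → ℝ := fun j =>
    (Set.Ioo (0:ℝ) 1).indicator (fun x => if j ∈ s then phi x else 1) with hh
  have hG : Integrable (fun x : Fin d → ℝ => ∏ j, h j (x j)) := by
    apply Integrable.fintype_prod (𝕜 := ℝ)
    intro i
    rw [hh]
    rw [integrable_indicator_iff measurableSet_Ioo]
    by_cases hi : i ∈ s
    · simp only [hi, if_true]
      exact phi_integrable
    · simp only [hi, if_false]
      exact integrableOn_const measure_Ioo_lt_top.ne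
  -- measurability of the target
  have hfm : Measurable (fun k : Fin d → ℝ =>
      (2 * ∑ j : Fin d, (1 - Real.cos (2 * Real.pi * k j)))⁻¹) := by
    apply Measurable.inv
    apply Measurable.const_mul
    apply Finset.measurable_sum
    intro j _
    exact (measurable_const.sub ((Real.continuous_cos.measurable).comp
      ((measurable_pi_apply j).const_mul _)))
  have hcube : MeasurableSet (Set.univ.pi fun _ : Fin d => Set.Ioo (0 : ℝ) 1) :=
    MeasurableSet.univ_pi fun _ => measurableSet_Ioo
  refine (hG.integrableOn).mono' (hfm.aestronglyMeasurable) ?_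
  filter_upwards [ae_restrict_mem hcube] with x hx
  rw [Set.mem_univ_pi] at hx
  -- pointwise bound
  have hxj : ∀ j, 0 < x j ∧ x j < 1 := fun j => (hx j)
  have hmpos : ∀ j : Fin d, 0 < min (x j) (1 - x j) := fun j =>
    lt_min (hxj j).1 (by linarith [(hxj j).2])
  -- each summand nonneg
  have hterm : ∀ j : Fin d, (0:ℝ) ≤ 1 - Real.cos (2 * Real.pi * x j) := fun j => by
    linarith [Real.cos_le_one (2 * Real.pi * x j)]
  have hsub : ∑ j ∈ s, (1 - Real.cos (2 * Real.pi * x j))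
      ≤ ∑ j : Fin d, (1 - Real.cos (2 * Real.pi * x j)) :=
    Finset.sum_le_sum_of_subset_of_nonneg (Finset.subset_univ s) (fun j _ _ => hterm j)
  set m : Fin d → ℝ := fun j => min (x j) (1 - x j) with hm
  have hcos : ∀ j : Fin d, 8 * (m j) ^ 2 ≤ 1 - Real.cos (2 * Real.pi * x j) := fun j =>
    cos_lb ⟨(hxj j).1.le, (hxj j).2.le⟩
  have hsum_s : ∑ j ∈ s, (1 - Real.cos (2 * Real.pi * x j))
      = (1 - Real.cos (2 * Real.pi * x j0)) + (1 - Real.cos (2 * Real.pi * x j1))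
        + (1 - Real.cos (2 * Real.pi * x j2)) := by
    rw [hs, Finset.sum_insert (by simp [hne01, hne02]),
      Finset.sum_insert (by simp [hne12]), Finset.sum_singleton]
    ring
  -- AM-GM
  set P : ℝ := (m j0) ^ ((2:ℝ)/3) * (m j1) ^ ((2:ℝ)/3) * (m j2) ^ ((2:ℝ)/3) with hP
  have hrw : ∀ j : Fin d, ((m j ^ 2 : ℝ)) ^ ((1:ℝ)/3) = (m j) ^ ((2:ℝ)/3) := by
    intro j
    rw [← Real.rpow_natCast (m j) 2, ← Real.rpow_mul (hmpos j).le]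
    norm_num
    rfl
  have hamgm := Real.geom_mean_le_arith_mean3_weighted
    (by norm_num : (0:ℝ) ≤ 1/3) (by norm_num : (0:ℝ) ≤ 1/3) (by norm_num : (0:ℝ) ≤ 1/3)
    (sq_nonneg (m j0)) (sq_nonneg (m j1)) (sq_nonneg (m j2)) (by norm_num)
  rw [hrw j0, hrw j1, hrw j2] at hamgm
  have hPpos : 0 < P := by
    apply mul_pos (mul_pos _ _)
    all_goals exact Real.rpow_pos_of_pos (hmpos _) _
  have hD : P ≤ 2 * ∑ j : Fin d, (1 - Real.cos (2 * Real.pi * x j)) := by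
    have := hcos j0; have := hcos j1; have := hcos j2
    nlinarith [hsub, hsum_s, hamgm]
  -- conclude pointwise
  have hfx : (2 * ∑ j : Fin d, (1 - Real.cos (2 * Real.pi * x j)))⁻¹ ≤ P⁻¹ :=
    inv_anti₀ hPpos hD
  have hprod : ∏ j, h j (x j) = P⁻¹ := by
    calc ∏ j, h j (x j) = ∏ j, (if j ∈ s then phi (x j) else 1) :=
          Finset.prod_congr rfl fun j _ => Set.indicator_of_mem (hx j) _
      _ = ∏ j ∈ s, phi (x j) := by rw [Finset.prod_ite_mem, Finset.univ_inter]
      _ = phi (x j0) * phi (x j1) * phi (x j2) := by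
          rw [hs, Finset.prod_insert (by simp [hne01, hne02]),
            Finset.prod_insert (by simp [hne12]), Finset.prod_singleton]
          ring
      _ = P⁻¹ := by
          rw [hP]
          simp only [phi, hm]
          rw [Real.rpow_neg (hmpos j0).le, Real.rpow_neg (hmpos j1).le,
            Real.rpow_neg (hmpos j2).le]
          norm_num
          ring
  rw [hprod, Real.norm_of_nonneg (inv_nonneg.mpr (le_trans hPpos.le hD))]
  exact hfx
end
end

section
/- If d = 1 or d = 2, then ∫_{[0,1)^d} dk / ( m + 2 Σ_{j=1}^d (1 − cos(2π k_j)) ) tends to +∞ as m → 0⁺ (i.e. the limit of the integral along m decreasing to 0 within (0,∞) is +∞). -/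
noncomputable section
open MeasureTheory

/-- For `d = 1` or `d = 2`, `∫_{[0,1)^d} dk / (m + 2 Σ_j (1 − cos(2π k_j)))` tends to `+∞`
as `m → 0⁺`. -/
theorem stmt9 (d : ℕ) (hd : d = 1 ∨ d = 2) :
    Filter.Tendsto
      (fun m : ℝ => ∫ k in Set.univ.pi fun _ : Fin d => Set.Ico (0 : ℝ) 1,
        (m + 2 * ∑ j : Fin d, (1 - Real.cos (2 * Real.pi * k j)))⁻¹)
      (nhdsWithin 0 (Set.Ioi 0)) Filter.atTop := by
  have hd1 : 1 ≤ d := by rcases hd with h | h <;> omega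
  have hd2 : d ≤ 2 := by rcases hd with h | h <;> omega
  set g : (Fin d → ℝ) → ℝ := fun k => 2 * ∑ j : Fin d, (1 - Real.cos (2 * Real.pi * k j))
    with hgdef
  have hg0 : ∀ k, 0 ≤ g k := by
    intro k
    have : ∀ j : Fin d, (0:ℝ) ≤ 1 - Real.cos (2 * Real.pi * k j) := fun j => by
      have := Real.cos_le_one (2 * Real.pi * k j); linarith
    have hsum : 0 ≤ ∑ j : Fin d, (1 - Real.cos (2 * Real.pi * k j)) :=
      Finset.sum_nonneg fun j _ => this j
    simp only [hgdef]; linarith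
  have hgcont : Continuous g :=
    continuous_const.mul (continuous_finset_sum _ fun j _ =>
      continuous_const.sub (Real.continuous_cos.comp (continuous_const.mul (continuous_apply j))))
  -- dyadic cubes
  set Q : ℕ → Set (Fin d → ℝ) := fun n => Set.univ.pi fun _ => Set.Ico (0:ℝ) ((2:ℝ)⁻¹ ^ n)
    with hQdef
  have hQmeas : ∀ n, MeasurableSet (Q n) := fun n =>
    MeasurableSet.univ_pi fun _ => measurableSet_Ico
  have ha0 : ∀ n : ℕ, (0:ℝ) < (2:ℝ)⁻¹ ^ n := fun n => by positivity
  have ha1 : ∀ n : ℕ, (2:ℝ)⁻¹ ^ n ≤ 1 := fun n =>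
    pow_le_one₀ (by norm_num) (by norm_num)
  have hQvol : ∀ n, volume (Q n) = ENNReal.ofReal (((2:ℝ)⁻¹ ^ n) ^ d) := by
    intro n
    have hv : volume (Set.Ico (0:ℝ) ((2:ℝ)⁻¹ ^ n)) = ENNReal.ofReal ((2:ℝ)⁻¹ ^ n) := by
      rw [Real.volume_Ico, sub_zero]
    rw [hQdef, volume_pi_pi]
    simp only [hv]
    rw [Finset.prod_const, Finset.card_univ, Fintype.card_fin,
      ← ENNReal.ofReal_pow (ha0 n).le]
  have hQfin : ∀ n, volume (Q n) ≠ ⊤ := fun n => by rw [hQvol]; exact ENNReal.ofReal_ne_top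
  have hQsub : ∀ n, Q (n+1) ⊆ Q n := by
    intro n
    apply Set.pi_mono
    intro i _
    apply Set.Ico_subset_Ico le_rfl
    exact pow_le_pow_of_le_one (by norm_num) (by norm_num) (Nat.le_succ n)
  -- integrability
  have hint : ∀ {m : ℝ}, 0 < m → ∀ n, IntegrableOn (fun k => (m + g k)⁻¹) (Q n) := by
    intro m hm n
    have hcont : Continuous fun k => (m + g k)⁻¹ :=
      (continuous_const.add hgcont).inv₀ fun k => by have := hg0 k; exact (by linarith : (0:ℝ) < m + g k).ne'
    refine Integrable.mono' (g := fun _ => m⁻¹)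
      (integrableOn_const (hQfin n))
      hcont.aestronglyMeasurable ?_
    filter_upwards with k
    rw [Real.norm_eq_abs, abs_of_nonneg (by have := hg0 k; positivity)]
    exact inv_anti₀ hm (by have := hg0 k; linarith)
  -- upper bound for g on Q n
  have hgQ : ∀ n, ∀ k ∈ Q n, g k ≤ 4 * Real.pi ^ 2 * d * ((2:ℝ)⁻¹ ^ n) ^ 2 := by
    intro n k hk
    have hterm : ∀ j : Fin d, 1 - Real.cos (2 * Real.pi * k j)
        ≤ 2 * Real.pi ^ 2 * ((2:ℝ)⁻¹ ^ n) ^ 2 := by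
      intro j
      have hkj : k j ∈ Set.Ico (0:ℝ) ((2:ℝ)⁻¹ ^ n) := hk j (Set.mem_univ j)
      have h1 : 1 - (2 * Real.pi * k j) ^ 2 / 2 ≤ Real.cos (2 * Real.pi * k j) :=
        Real.one_sub_sq_div_two_le_cos
      have h2 : (2 * Real.pi * k j) ^ 2 ≤ (2 * Real.pi) ^ 2 * ((2:ℝ)⁻¹ ^ n) ^ 2 := by
        rw [mul_pow]
        have : (k j) ^ 2 ≤ ((2:ℝ)⁻¹ ^ n) ^ 2 :=
          pow_le_pow_left₀ hkj.1 hkj.2.le 2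
        nlinarith [sq_nonneg (2 * Real.pi)]
      nlinarith
    have hsum := Finset.sum_le_sum (fun j (_ : j ∈ Finset.univ) => hterm j)
    simp only [Finset.sum_const, Finset.card_univ, Fintype.card_fin, nsmul_eq_mul] at hsum
    simp only [hgdef]
    nlinarith
  -- the constant c
  set c : ℝ := (2 * (1 + 4 * Real.pi ^ 2 * d))⁻¹ with hcdef
  have hπ : (0:ℝ) < Real.pi := Real.pi_pos
  have hdpos : (0:ℝ) < d := by exact_mod_cast hd1
  have hc : 0 < c := by rw [hcdef]; positivity
  -- single step: c + ∫_{Q(n+1)} ≤ ∫_{Q n} when m ≤ (2⁻¹^n)^2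
  have hstep : ∀ {m : ℝ}, 0 < m → ∀ n : ℕ, m ≤ ((2:ℝ)⁻¹ ^ n) ^ 2 →
      c + ∫ k in Q (n+1), (m + g k)⁻¹ ≤ ∫ k in Q n, (m + g k)⁻¹ := by
    intro m hm n hmn
    set a : ℝ := (2:ℝ)⁻¹ ^ n with hadef
    have haa : 0 < a := ha0 n
    have hdiff : (∫ k in Q n \ Q (n+1), (m + g k)⁻¹)
        = (∫ k in Q n, (m + g k)⁻¹) - ∫ k in Q (n+1), (m + g k)⁻¹ :=
      integral_diff (hQmeas (n+1)) (hint hm n) (hQsub n)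
    have hvolA : volume (Q n \ Q (n+1)) = volume (Q n) - volume (Q (n+1)) :=
      measure_diff (hQsub n) (hQmeas (n+1)).nullMeasurableSet (hQfin (n+1))
    have hle : ((2:ℝ)⁻¹ ^ (n+1)) ^ d ≤ ((2:ℝ)⁻¹ ^ n) ^ d :=
      pow_le_pow_left₀ (by positivity)
        (pow_le_pow_of_le_one (by norm_num) (by norm_num) (Nat.le_succ n)) d
    have hvolA' : (volume (Q n \ Q (n+1))).toReal = a ^ d - ((2:ℝ)⁻¹ ^ (n+1)) ^ d := by
      rw [hvolA, hQvol, hQvol,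
        ← ENNReal.ofReal_sub _ (by positivity), ENNReal.toReal_ofReal (by linarith), hadef]
    have hb : ∀ k ∈ Q n \ Q (n+1),
        ((1 + 4 * Real.pi ^ 2 * d) * a ^ 2)⁻¹ ≤ (m + g k)⁻¹ := by
      intro k hk
      have h1 := hgQ n k hk.1
      rw [← hadef] at h1
      have h2 : m + g k ≤ (1 + 4 * Real.pi ^ 2 * d) * a ^ 2 := by nlinarith
      exact inv_anti₀ (by have := hg0 k; positivity) h2
    have hlow := setIntegral_ge_of_const_le_real ((hQmeas n).diff (hQmeas (n+1)))
      (by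
        intro h
        exact hQfin n (eq_top_iff.2 (h ▸ measure_mono Set.diff_subset)))
      hb ((hint hm n).mono_set Set.diff_subset)
    have hvol2 : a ^ d / 2 ≤ (volume (Q n \ Q (n+1))).toReal := by
      rw [hvolA']
      have h21 : ((2:ℝ)⁻¹ ^ (n+1)) ^ d = (2:ℝ)⁻¹ ^ d * a ^ d := by
        rw [← mul_pow, pow_succ, mul_comm]
      have h22 : (2:ℝ)⁻¹ ^ d ≤ (2:ℝ)⁻¹ := by
        calc (2:ℝ)⁻¹ ^ d ≤ (2:ℝ)⁻¹ ^ 1 :=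
          pow_le_pow_of_le_one (by norm_num) (by norm_num) hd1
        _ = 2⁻¹ := pow_one _
      have had : 0 < a ^ d := by positivity
      nlinarith
    have hcle : c ≤ ((1 + 4 * Real.pi ^ 2 * d) * a ^ 2)⁻¹ * (volume (Q n \ Q (n+1))).toReal := by
      have ha2d : a ^ 2 ≤ a ^ d := pow_le_pow_of_le_one haa.le (ha1 n) hd2
      have hbpos : (0:ℝ) < ((1 + 4 * Real.pi ^ 2 * d) * a ^ 2)⁻¹ := by positivity
      have hBpos : (0:ℝ) < 1 + 4 * Real.pi ^ 2 * d := by positivity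
      calc c = ((1 + 4 * Real.pi ^ 2 * d) * a ^ 2)⁻¹ * (a ^ 2 / 2) := by
            rw [hcdef]; field_simp
        _ ≤ ((1 + 4 * Real.pi ^ 2 * d) * a ^ 2)⁻¹ * (a ^ d / 2) :=
            mul_le_mul_of_nonneg_left (by linarith) hbpos.le
        _ ≤ _ := mul_le_mul_of_nonneg_left hvol2 hbpos.le
    linarith [hcle.trans hlow, hdiff]
  -- main induction
  have hmain : ∀ {m : ℝ}, 0 < m → ∀ N : ℕ, m ≤ ((2:ℝ)⁻¹ ^ N) ^ 2 →
      (N : ℝ) * c + (∫ k in Q N, (m + g k)⁻¹) ≤ ∫ k in Q 0, (m + g k)⁻¹ := by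
    intro m hm N
    induction N with
    | zero => intro _; simp
    | succ N ih =>
      intro hmN
      have hdec : ((2:ℝ)⁻¹ ^ (N+1)) ^ 2 ≤ ((2:ℝ)⁻¹ ^ N) ^ 2 :=
        pow_le_pow_left₀ (by positivity)
          (pow_le_pow_of_le_one (by norm_num) (by norm_num) (Nat.le_succ N)) 2
      have h1 := ih (hmN.trans hdec)
      have h2 := hstep hm N (hmN.trans hdec)
      push_cast
      linarith
  -- finish
  rw [Filter.tendsto_atTop]
  intro C
  obtain ⟨N, hN⟩ := exists_nat_ge (C / c)
  have hNC : C ≤ (N : ℝ) * c := by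
    rw [div_le_iff₀ hc] at hN; linarith
  have hmem : Set.Ioo (0:ℝ) (((2:ℝ)⁻¹ ^ N) ^ 2) ∈ nhdsWithin (0:ℝ) (Set.Ioi 0) :=
    Ioo_mem_nhdsGT_of_mem ⟨le_rfl, by positivity⟩
  filter_upwards [hmem] with m hm
  have hm0 : 0 < m := hm.1
  have hQ0 : (Set.univ.pi fun _ : Fin d => Set.Ico (0:ℝ) 1) = Q 0 := by
    rw [hQdef]; norm_num
  rw [hQ0]
  have hnn : 0 ≤ ∫ k in Q N, (m + g k)⁻¹ :=
    setIntegral_nonneg (hQmeas N) fun k _ => by have := hg0 k; positivity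
  have := hmain hm0 N hm.2.le
  calc C ≤ (N : ℝ) * c := hNC
    _ ≤ (N : ℝ) * c + ∫ k in Q N, (m + g k)⁻¹ := by linarith
    _ ≤ _ := this
end
end
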